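/- In the sedenion algebra 𝕊, with α = e₁ + e₁₀ and β = e₇ + e₁₂, the linear polynomial f(x) = α x − β has no root in 𝕊. Consequently, 𝕊 is not algebraically closed in the sense that some nonconstant polynomials over 𝕊 have no roots. -/

import Mathlib

/-- Cayley–Dickson double (with γ = -1) of an algebra with involution. -/
def CD (A : Type*) : Type _ := A × A

namespace CD

variable {A : Type*}

instance [AddCommGroup A] : AddCommGroup (CD A) := inferInstanceAs (AddCommGroup (A × A))
noncomputable instance [AddCommGroup A] [Module ℝ A] : Module ℝ (CD A) :=
  inferInstanceAs (Module ℝ (A × A))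

/-- Build an element of the double from its two halves. -/
def mk (a b : A) : CD A := (a, b)

section
set_option linter.unusedSectionVars false

/-- A star operation fixing `1`. -/
class StarOne (A : Type*) [One A] [Star A] : Prop where
  star_one : star (1 : A) = 1

variable [NonAssocRing A] [StarAddMonoid A] [StarOne A]

instance : One (CD A) := ⟨((1 : A), 0)⟩
instance : Mul (CD A) :=
  ⟨fun x y => (x.1 * y.1 - star y.2 * x.2, y.2 * x.1 + x.2 * star y.1)⟩
instance : Star (CD A) := ⟨fun x => (star x.1, -x.2)⟩

lemma mul_def (x y : CD A) :
    x * y = (x.1 * y.1 - star y.2 * x.2, y.2 * x.1 + x.2 * star y.1) := rfl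
lemma one_def : (1 : CD A) = ((1 : A), 0) := rfl
lemma star_def (x : CD A) : star x = (star x.1, -x.2) := rfl
lemma add_def (x y : CD A) : x + y = (x.1 + y.1, x.2 + y.2) := rfl
lemma zero_def : (0 : CD A) = ((0 : A), 0) := rfl

instance instNonAssocRing : NonAssocRing (CD A) where
  __ := (inferInstance : AddCommGroup (CD A))
  left_distrib a b c := by
    refine Prod.ext ?_ ?_
    · show a.1 * (b.1 + c.1) - star (b.2 + c.2) * a.2 =
        (a.1 * b.1 - star b.2 * a.2) + (a.1 * c.1 - star c.2 * a.2)
      rw [star_add]; noncomm_ring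
    · show (b.2 + c.2) * a.1 + a.2 * star (b.1 + c.1) =
        (b.2 * a.1 + a.2 * star b.1) + (c.2 * a.1 + a.2 * star c.1)
      rw [star_add]; noncomm_ring
  right_distrib a b c := by
    refine Prod.ext ?_ ?_
    · show (a.1 + b.1) * c.1 - star c.2 * (a.2 + b.2) =
        (a.1 * c.1 - star c.2 * a.2) + (b.1 * c.1 - star c.2 * b.2)
      noncomm_ring
    · show c.2 * (a.1 + b.1) + (a.2 + b.2) * star c.1 =
        (c.2 * a.1 + a.2 * star c.1) + (c.2 * b.1 + b.2 * star c.1)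
      noncomm_ring
  zero_mul a := by
    refine Prod.ext ?_ ?_
    · show (0 : A) * a.1 - star a.2 * 0 = 0
      simp
    · show a.2 * 0 + (0 : A) * star a.1 = 0
      simp
  mul_zero a := by
    refine Prod.ext ?_ ?_
    · show a.1 * 0 - star (0 : A) * a.2 = 0
      simp
    · show (0 : A) * a.1 + a.2 * star (0 : A) = 0
      simp
  one_mul a := by
    refine Prod.ext ?_ ?_
    · show (1 : A) * a.1 - star a.2 * 0 = a.1
      simp
    · show a.2 * 1 + (0 : A) * star a.1 = a.2
      simp
  mul_one a := by
    refine Prod.ext ?_ ?_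
    · show a.1 * 1 - star (0 : A) * a.2 = a.1
      simp
    · show (0 : A) * a.1 + a.2 * star (1 : A) = a.2
      simp [StarOne.star_one]

instance instStarAddMonoid : StarAddMonoid (CD A) where
  star_involutive x := by
    refine Prod.ext ?_ ?_
    · show star (star x.1) = x.1
      simp
    · show -(-x.2) = x.2
      simp
  star_add x y := by
    refine Prod.ext ?_ ?_
    · show star (x.1 + y.1) = star x.1 + star y.1
      simp
    · show -(x.2 + y.2) = -x.2 + -y.2
      abel

instance instStarOne : StarOne (CD A) :=
  ⟨Prod.ext (StarOne.star_one) (show -(0 : A) = 0 by simp)⟩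

end

end CD

instance : CD.StarOne ℝ := ⟨by simp⟩

/-- The real octonions, as a three-fold Cayley–Dickson double of ℝ. -/
def Octonion : Type := CD (CD (CD ℝ))

instance : NonAssocRing Octonion := inferInstanceAs (NonAssocRing (CD (CD (CD ℝ))))
instance : StarAddMonoid Octonion := inferInstanceAs (StarAddMonoid (CD (CD (CD ℝ))))
instance : CD.StarOne Octonion := inferInstanceAs (CD.StarOne (CD (CD (CD ℝ))))
noncomputable instance : Module ℝ Octonion := inferInstanceAs (Module ℝ (CD (CD (CD ℝ))))

/-- The real sedenions, as the Cayley–Dickson double of the octonions. -/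
def Sedenion : Type := CD Octonion

instance : NonAssocRing Sedenion := inferInstanceAs (NonAssocRing (CD Octonion))
instance : StarAddMonoid Sedenion := inferInstanceAs (StarAddMonoid (CD Octonion))
instance : CD.StarOne Sedenion := inferInstanceAs (CD.StarOne (CD Octonion))
noncomputable instance : Module ℝ Sedenion := inferInstanceAs (Module ℝ (CD Octonion))

/-- Assemble a complex number, quaternion, octonion, sedenion from real coordinates. -/
def mkC (f : ℕ → ℝ) (k : ℕ) : CD ℝ := CD.mk (f k) (f (k+1))
def mkH (f : ℕ → ℝ) (k : ℕ) : CD (CD ℝ) := CD.mk (mkC f k) (mkC f (k+2))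
def mkO (f : ℕ → ℝ) (k : ℕ) : Octonion := CD.mk (mkH f k) (mkH f (k+4))
def mkS (f : ℕ → ℝ) : Sedenion := CD.mk (mkO f 0) (mkO f 8)

/-- The standard basis `e₀, …, e₁₅` of the sedenions. -/
def sE (n : ℕ) : Sedenion := mkS (fun k => if k = n then 1 else 0)

/-- The standard basis `e₀, …, e₇` of the octonions. -/
def oE (n : ℕ) : Octonion := mkO (fun k => if k = n then 1 else 0) 0

/-- Powers in a (power-associative) non-associative algebra. -/
def cdpow {A : Type*} [One A] [Mul A] (x : A) : ℕ → A
  | 0 => 1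
  | n+1 => cdpow x n * x

/-!
On a Cayley–Dickson double, the form `⟨(a, b), (c, d)⟩ = ⟨a, c⟩ + ⟨b, d⟩` inherits the invariance
identities `⟨a, bc⟩ = ⟨a c̄, b⟩ = ⟨b̄ a, c⟩` and `⟨ā, b̄⟩ = ⟨a, b⟩` from the halves, as long as
conjugation reverses products there; starting from `ℝ` they therefore hold on the sedenions.
For `α = e₁ + e₁₀`, `β = e₇ + e₁₂` one has `ᾱ = -α` and `αβ = 0`, so a root of `αx = β` would give
`N(β) = ⟨β, αx⟩ = ⟨ᾱβ, x⟩ = -⟨αβ, x⟩ = 0`, whereas `N(β) = 2`.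
-/

structure IsInvariantForm {A : Type*} [AddCommMonoid A] [Module ℝ A] [Mul A] [Star A]
    (B : LinearMap.BilinForm ℝ A) : Prop where
  star_star : ∀ a b : A, B (star a) (star b) = B a b
  mul_right : ∀ a b c : A, B a (b * c) = B (a * star c) b
  mul_left : ∀ a b c : A, B a (b * c) = B (star b * a) c

theorem IsInvariantForm.not_exists_mul_eq {A : Type*} [AddCommMonoid A] [Module ℝ A] [Mul A]
    [Star A] {B : LinearMap.BilinForm ℝ A} (hB : IsInvariantForm B) {a b : A}
    (hab : star a * b = 0) (hb : B b b ≠ 0) : ¬ ∃ x, a * x = b := by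
  rintro ⟨x, rfl⟩
  refine hb ?_
  calc B (a * x) (a * x) = B (star a * (a * x)) x := hB.mul_left _ a x
    _ = 0 := by rw [hab, map_zero, LinearMap.zero_apply]

theorem isInvariantForm_mul_real : IsInvariantForm (LinearMap.mul ℝ ℝ) where
  star_star a b := by simp
  mul_right a b c := by simp only [LinearMap.mul_apply', star_trivial]; ring
  mul_left a b c := by simp only [LinearMap.mul_apply', star_trivial]; ring

namespace CD

section AddCommGroup

variable {A : Type*} [AddCommGroup A]

@[simp] theorem mk_eq_zero {a b : A} : mk a b = 0 ↔ a = 0 ∧ b = 0 := Prod.mk_eq_zero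
@[simp] theorem mk_add_mk (a b c d : A) : mk a b + mk c d = mk (a + c) (b + d) := rfl
@[simp] theorem neg_mk (a b : A) : -mk a b = mk (-a) (-b) := rfl

variable [Module ℝ A]

def form (B : LinearMap.BilinForm ℝ A) : LinearMap.BilinForm ℝ (CD A) :=
  B.compl₁₂ (LinearMap.fst ℝ A A) (LinearMap.fst ℝ A A) +
    B.compl₁₂ (LinearMap.snd ℝ A A) (LinearMap.snd ℝ A A)

@[simp] theorem form_mk (B : LinearMap.BilinForm ℝ A) (a b c d : A) :
    form B (mk a b) (mk c d) = B a c + B b d := rfl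

end AddCommGroup

variable {A : Type*} [NonAssocRing A] [StarAddMonoid A]

@[simp] theorem mk_mul_mk (a b c d : A) :
    mk a b * mk c d = mk (a * c - star d * b) (d * a + b * star c) := rfl
@[simp] theorem star_mk (a b : A) : star (mk a b) = mk (star a) (-b) := rfl

theorem star_mul_of_star_mul (h : ∀ x y : A, star (x * y) = star y * star x) (x y : CD A) :
    star (x * y) = star y * star x := by
  refine Prod.ext ?_ ?_
  · show star (x.1 * y.1 - star y.2 * x.2) = star y.1 * star x.1 - star (-x.2) * -y.2
    rw [star_sub, h, h, star_star, star_neg, neg_mul_neg]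
  · show -(y.2 * x.1 + x.2 * star y.1) = -x.2 * star y.1 + -y.2 * star (star x.1)
    rw [star_star, neg_mul, neg_mul, neg_add, add_comm]

theorem isInvariantForm_form [Module ℝ A] {B : LinearMap.BilinForm ℝ A}
    (h : ∀ x y : A, star (x * y) = star y * star x) (hB : IsInvariantForm B) :
    IsInvariantForm (form B) where
  star_star a b := by
    show B (star a.1) (star b.1) + B (-a.2) (-b.2) = B a.1 b.1 + B a.2 b.2
    simp [hB.star_star]
  mul_right a b c := by
    obtain ⟨x, y⟩ := a
    obtain ⟨a, b⟩ := b
    obtain ⟨c, d⟩ := c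
    show B x (a * c - star d * b) + B y (d * a + b * star c) =
      B (x * star c - star (-d) * y) a + B (-d * x + y * star (star c)) b
    have hx := hB.mul_left x (star d) b
    have hy := hB.mul_right y b (star c)
    simp only [star_star] at hx hy
    simp only [map_sub, map_add, map_neg, LinearMap.sub_apply, LinearMap.add_apply,
      LinearMap.neg_apply, star_neg, star_star, neg_mul]
    linarith [hB.mul_right x a c, hB.mul_left y d a]
  mul_left a b c := by
    obtain ⟨x, y⟩ := a
    obtain ⟨a, b⟩ := b
    obtain ⟨c, d⟩ := c
    show B x (a * c - star d * b) + B y (d * a + b * star c) =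
      B (star a * x - star y * -b) c + B (y * star a + -b * star x) d
    have hx := hB.mul_right x (star d) b
    have hy := hB.mul_left y b (star c)
    rw [← hB.star_star (x * star b)] at hx
    rw [← hB.star_star (star b * y)] at hy
    simp only [h, star_star] at hx hy
    simp only [map_sub, map_add, map_neg, LinearMap.sub_apply, LinearMap.add_apply,
      LinearMap.neg_apply, neg_mul, mul_neg]
    linarith [hB.mul_left x a c, hB.mul_right y d a]

end CD

/-- `sE n`, written in the tower `CD (CD (CD (CD ℝ)))` that `Sedenion` unfolds to, where the
`CD` simp lemmas apply; the two are definitionally equal. -/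
def towerBasis (n : ℕ) : CD (CD (CD (CD ℝ))) :=
  CD.mk (CD.mk (mkH (fun k => if k = n then 1 else 0) 0) (mkH (fun k => if k = n then 1 else 0) 4))
    (CD.mk (mkH (fun k => if k = n then 1 else 0) 8) (mkH (fun k => if k = n then 1 else 0) 12))

noncomputable def sedenionForm : LinearMap.BilinForm ℝ (CD (CD (CD (CD ℝ)))) :=
  CD.form (CD.form (CD.form (CD.form (LinearMap.mul ℝ ℝ))))

theorem isInvariantForm_sedenionForm : IsInvariantForm sedenionForm := by
  have h₁ := CD.star_mul_of_star_mul (A := ℝ) star_mul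
  have h₂ := CD.star_mul_of_star_mul h₁
  have h₃ := CD.star_mul_of_star_mul h₂
  exact CD.isInvariantForm_form h₃ <| CD.isInvariantForm_form h₂ <|
    CD.isInvariantForm_form h₁ <| CD.isInvariantForm_form star_mul isInvariantForm_mul_real

theorem star_towerBasis_one_add_ten :
    star (towerBasis 1 + towerBasis 10) = -(towerBasis 1 + towerBasis 10) := by
  simp [towerBasis, mkH, mkC]

theorem towerBasis_one_add_ten_mul_seven_add_twelve :
    (towerBasis 1 + towerBasis 10) * (towerBasis 7 + towerBasis 12) = 0 := by
  simp [towerBasis, mkH, mkC]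

theorem towerBasis_one_add_ten_ne_zero : towerBasis 1 + towerBasis 10 ≠ 0 := by
  simp [towerBasis, mkH, mkC]

theorem sedenionForm_towerBasis_seven_add_twelve :
    sedenionForm (towerBasis 7 + towerBasis 12) (towerBasis 7 + towerBasis 12) = 2 := by
  norm_num [sedenionForm, towerBasis, mkH, mkC]

/-- In the sedenions, with `α = e₁ + e₁₀` and `β = e₇ + e₁₂`, the linear
polynomial `f(x) = α x - β` has no root in `𝕊`. Consequently `𝕊` is not algebraically
closed: there is a nonconstant (linear, with nonzero leading coefficient) polynomial over
`𝕊` with no roots. -/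
theorem stmt6 :
    (¬ ∃ x : Sedenion, (sE 1 + sE 10) * x - (sE 7 + sE 12) = 0) ∧
    ∃ a b : Sedenion, a ≠ 0 ∧ ¬ ∃ x : Sedenion, a * x + b = 0 := by
  have hab : star (towerBasis 1 + towerBasis 10) * (towerBasis 7 + towerBasis 12) = 0 := by
    rw [star_towerBasis_one_add_ten, neg_mul (towerBasis 1 + towerBasis 10),
      towerBasis_one_add_ten_mul_seven_add_twelve, neg_zero]
  have hb : sedenionForm (towerBasis 7 + towerBasis 12) (towerBasis 7 + towerBasis 12) ≠ 0 := by
    rw [sedenionForm_towerBasis_seven_add_twelve]; norm_num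
  have no_root : ¬ ∃ x : Sedenion, (sE 1 + sE 10) * x = sE 7 + sE 12 :=
    isInvariantForm_sedenionForm.not_exists_mul_eq hab hb
  refine ⟨fun ⟨x, hx⟩ => no_root ⟨x, sub_eq_zero.mp hx⟩,
    sE 1 + sE 10, -(sE 7 + sE 12), towerBasis_one_add_ten_ne_zero, ?_⟩
  rintro ⟨x, hx⟩
  exact no_root ⟨x, by rwa [← sub_eq_add_neg, sub_eq_zero] at hx⟩
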